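/- (Theorem 2: robust stability of IMC under model mismatch.) Let p ∈ [1,∞). Let F̂ and Δ be strictly causal operators (ℕ→ℝ^n)×(ℕ→ℝ^m) → (ℕ→ℝ^n) with F̂(x,u)_0 = Δ(x,u)_0 = 0, and let the true plant be F = F̂ + Δ. Assume: Δ has finite ℓ_p-gain γ_Δ > 0 in the sense ‖Δ(x,u)‖_p ≤ γ_Δ(‖x‖_p + ‖u‖_p) for all x ∈ ℓ_p, u ∈ ℓ_p; the true transition operator 𝓕 : (u,w) ↦ x (unique solution of x = F(x,u)+w) has finite ℓ_p-gain γ_F > 0 in the sense ‖𝓕(u,w)‖_p ≤ γ_F(‖u‖_p + ‖w‖_p); and M is a causal operator with finite ℓ_p-gain γ_M satisfying γ_M < γ_Δ^{-1}(γ_F + 1)^{-1}. Then for every w ∈ ℓ_p, the trajectories of the mismatched IMC closed loop (x = F(x,u)+w, ŵ = x − F̂(x,u), u = M(ŵ)) satisfy u ∈ ℓ_p and x ∈ ℓ_p with ‖u‖_p ≤ (γ_M (γ_Δ γ_F + 1)/(1 − γ_Δ γ_M (γ_F + 1))) ‖w‖_p and ‖x‖_p ≤ (γ_F (1 + γ_M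 (1 − γ_Δ))/(1 − γ_Δ γ_M (γ_F + 1))) ‖w‖_p; in particular the control policy ŵ_t = x_t − F̂(x,u)_t, u_t = M_t(ŵ_{t:0}) stabilizes the true closed-loop system. -/

import Mathlib

/-- An operator on sequences is causal if its output at time `t` depends only on
inputs up to time `t`. -/
def Causal {E F : Type*} (A : (ℕ → E) → (ℕ → F)) : Prop :=
  ∀ x y : ℕ → E, ∀ t : ℕ, (∀ s ≤ t, x s = y s) → A x t = A y t

/-- An operator on sequences is strictly causal if its output at time `t` depends only on
inputs strictly before time `t`. -/
def StrictlyCausal {E F : Type*} (A : (ℕ → E) → (ℕ → F)) : Prop :=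
  ∀ x y : ℕ → E, ∀ t : ℕ, (∀ s < t, x s = y s) → A x t = A y t

/-- A two-argument operator on sequences is strictly causal in its joint argument. -/
def StrictlyCausal2 {E E' F : Type*} (A : (ℕ → E) → (ℕ → E') → (ℕ → F)) : Prop :=
  ∀ x x' : ℕ → E, ∀ u u' : ℕ → E', ∀ t : ℕ,
    (∀ s < t, x s = x' s) → (∀ s < t, u s = u' s) → A x u t = A x' u' t

/-- A sequence belongs to `ℓ_p` if the `p`-th powers of the norms are summable. -/
def InLp (p : ℝ) {E : Type*} [Norm E] (x : ℕ → E) : Prop :=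
  Summable fun t => ‖x t‖ ^ p

/-- The `ℓ_p` norm of a sequence. -/
noncomputable def lpNorm (p : ℝ) {E : Type*} [Norm E] (x : ℕ → E) : ℝ :=
  (∑' t, ‖x t‖ ^ p) ^ (1 / p)

/-!
Truncate at time `T`. Strict causality lets the true plant driven by the truncated input and
disturbance reproduce `x` up to `T`, and causality of `M` makes `u` agree up to `T` with `M`
applied to `Δ(x, u) + w` evaluated on the truncated trajectories. The gain bounds therefore apply
to the truncations `x_T`, `u_T`, all of which lie in `ℓ_p`, giving
`‖x_T‖ ≤ γ_F (‖u_T‖ + ‖w‖)` and `‖u_T‖ ≤ γ_M (γ_Δ (‖x_T‖ + ‖u_T‖) + ‖w‖)`. The small-gain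
condition solves these for bounds independent of `T`, and letting `T → ∞` gives the theorem.
-/

open Set

section LpSequences

variable {E F : Type*} [SeminormedAddCommGroup E] [SeminormedAddCommGroup F] {p : ℝ}

lemma lpNorm_nonneg (p : ℝ) (x : ℕ → E) : 0 ≤ lpNorm p x :=
  Real.rpow_nonneg (tsum_nonneg fun _ => Real.rpow_nonneg (norm_nonneg _) _) _

lemma lpNorm_rpow (hp : p ≠ 0) (x : ℕ → E) : lpNorm p x ^ p = ∑' t, ‖x t‖ ^ p := by
  rw [lpNorm, one_div, Real.rpow_inv_rpow
    (tsum_nonneg fun _ => Real.rpow_nonneg (norm_nonneg _) _) hp]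

lemma InLp.of_norm_le (hp : 0 ≤ p) {x : ℕ → E} {y : ℕ → F} (hy : InLp p y)
    (h : ∀ t, ‖x t‖ ≤ ‖y t‖) : InLp p x :=
  hy.of_nonneg_of_le (fun _ => Real.rpow_nonneg (norm_nonneg _) _)
    (fun t => Real.rpow_le_rpow (norm_nonneg _) (h t) hp)

lemma lpNorm_le_of_norm_le (hp : 0 ≤ p) {x : ℕ → E} {y : ℕ → F} (hy : InLp p y)
    (h : ∀ t, ‖x t‖ ≤ ‖y t‖) : lpNorm p x ≤ lpNorm p y :=
  Real.rpow_le_rpow (tsum_nonneg fun _ => Real.rpow_nonneg (norm_nonneg _) _)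
    ((hy.of_norm_le hp h).tsum_le_tsum (fun t => Real.rpow_le_rpow (norm_nonneg _) (h t) hp) hy)
    (one_div_nonneg.mpr hp)

lemma InLp.add (hp : 1 ≤ p) {x y : ℕ → E} (hx : InLp p x) (hy : InLp p y) : InLp p (x + y) :=
  (Real.summable_Lp_add_of_nonneg hp (fun t => norm_nonneg (x t)) (fun t => norm_nonneg (y t))
    hx hy).of_nonneg_of_le (fun _ => Real.rpow_nonneg (norm_nonneg _) _)
    (fun t => Real.rpow_le_rpow (norm_nonneg _) (norm_add_le _ _) (by linarith))

lemma lpNorm_add_le (hp : 1 ≤ p) {x y : ℕ → E} (hx : InLp p x) (hy : InLp p y) :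
    lpNorm p (x + y) ≤ lpNorm p x + lpNorm p y := by
  have hp0 : 0 ≤ p := by linarith
  refine le_trans ?_ (Real.Lp_add_le_tsum_of_nonneg' hp (fun t => norm_nonneg (x t))
    (fun t => norm_nonneg (y t)) hx hy)
  exact Real.rpow_le_rpow (tsum_nonneg fun _ => Real.rpow_nonneg (norm_nonneg _) _)
    ((hx.add hp hy).tsum_le_tsum
      (fun t => Real.rpow_le_rpow (norm_nonneg _) (norm_add_le _ _) hp0)
      (Real.summable_Lp_add_of_nonneg hp (fun t => norm_nonneg (x t))
        (fun t => norm_nonneg (y t)) hx hy))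
    (one_div_nonneg.mpr hp0)

lemma inLp_indicator_of_finite (hp : p ≠ 0) {s : Set ℕ} (hs : s.Finite) (x : ℕ → E) :
    InLp p (s.indicator x) :=
  summable_of_ne_finset_zero (s := hs.toFinset) fun t ht => by
    rw [indicator_of_notMem (by simpa using ht), norm_zero, Real.zero_rpow hp]

lemma lpNorm_indicator_le (hp : 0 ≤ p) (s : Set ℕ) {x : ℕ → E} (hx : InLp p x) :
    lpNorm p (s.indicator x) ≤ lpNorm p x :=
  lpNorm_le_of_norm_le hp hx (norm_indicator_le_norm_self x)

lemma inLp_and_lpNorm_le_of_lpNorm_indicator_Iic_le (hp : 0 < p) {x : ℕ → E} {c : ℝ}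
    (h : ∀ T, lpNorm p ((Iic T).indicator x) ≤ c) : InLp p x ∧ lpNorm p x ≤ c := by
  have hc : 0 ≤ c := (lpNorm_nonneg p _).trans (h 0)
  have hpartial : ∀ N, ∑ t ∈ Finset.range N, ‖x t‖ ^ p ≤ c ^ p := fun N =>
    calc ∑ t ∈ Finset.range N, ‖x t‖ ^ p
        = ∑ t ∈ Finset.range N, ‖(Iic N).indicator x t‖ ^ p :=
          Finset.sum_congr rfl fun t ht => by
            rw [indicator_of_mem (mem_Iic.mpr (Finset.mem_range.mp ht).le)]
      _ ≤ ∑' t, ‖(Iic N).indicator x t‖ ^ p :=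
          (inLp_indicator_of_finite hp.ne' (finite_Iic N) x).sum_le_tsum _
            fun _ _ => Real.rpow_nonneg (norm_nonneg _) _
      _ = lpNorm p ((Iic N).indicator x) ^ p := (lpNorm_rpow hp.ne' _).symm
      _ ≤ c ^ p := Real.rpow_le_rpow (lpNorm_nonneg p _) (h N) hp.le
  refine ⟨summable_of_sum_range_le (fun _ => Real.rpow_nonneg (norm_nonneg _) _) hpartial, ?_⟩
  calc lpNorm p x ≤ (c ^ p) ^ (1 / p) :=
        Real.rpow_le_rpow (tsum_nonneg fun _ => Real.rpow_nonneg (norm_nonneg _) _)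
          (Real.tsum_le_of_sum_range_le (fun _ => Real.rpow_nonneg (norm_nonneg _) _) hpartial)
          (one_div_nonneg.mpr hp.le)
    _ = c := by rw [one_div, Real.rpow_rpow_inv hc hp.ne']

end LpSequences

section Causality

variable {E U : Type*}

noncomputable def causalFixedPoint [Nonempty E] (A : (ℕ → E) → ℕ → E) : ℕ → E
  | t => A (fun s => if s < t then causalFixedPoint A s else Classical.arbitrary E) t

lemma StrictlyCausal.apply_causalFixedPoint [Nonempty E] {A : (ℕ → E) → ℕ → E}
    (hA : StrictlyCausal A) : A (causalFixedPoint A) = causalFixedPoint A := by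
  funext t
  rw [causalFixedPoint]
  exact hA _ _ t fun s hs => by rw [if_pos hs]

variable [Add E] {G H : (ℕ → E) → (ℕ → U) → ℕ → E}

lemma StrictlyCausal2.add (hG : StrictlyCausal2 G) (hH : StrictlyCausal2 H) :
    StrictlyCausal2 fun x u => G x u + H x u := fun x x' u u' t hx hu => by
  simp only [Pi.add_apply, hG x x' u u' t hx hu, hH x x' u u' t hx hu]

lemma StrictlyCausal2.exists_solution [Nonempty E] (hG : StrictlyCausal2 G) (u : ℕ → U)
    (w : ℕ → E) : ∃ x : ℕ → E, ∀ t, x t = G x u t + w t := by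
  have hA : StrictlyCausal fun x t => G x u t + w t := fun x y t hxy => by
    simp only [hG x y u u t hxy fun _ _ => rfl]
  exact ⟨causalFixedPoint _, fun t => (congrFun hA.apply_causalFixedPoint t).symm⟩

lemma StrictlyCausal2.eq_of_solution_of_eq_le (hG : StrictlyCausal2 G) {x x' w w' : ℕ → E}
    {u u' : ℕ → U} (hx : ∀ t, x t = G x u t + w t) (hx' : ∀ t, x' t = G x' u' t + w' t)
    {T : ℕ} (hu : ∀ s ≤ T, u s = u' s) (hw : ∀ s ≤ T, w s = w' s) : ∀ t ≤ T, x t = x' t := by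
  intro t
  induction t using Nat.strong_induction_on with
  | _ t ih =>
    intro htT
    rw [hx, hx', hw t htT, hG x x' u u' t (fun s hs => ih s hs (hs.le.trans htT))
      fun s hs => hu s (hs.le.trans htT)]

end Causality

section TruncatedGains

variable {E U : Type*} [SeminormedAddCommGroup E] [SeminormedAddCommGroup U] {p : ℝ}

lemma StrictlyCausal2.lpNorm_indicator_solution_le [Nonempty E]
    {G : (ℕ → E) → (ℕ → U) → ℕ → E} (hG : StrictlyCausal2 G) (hp : 0 < p) {γ : ℝ} (hγ : 0 ≤ γ)
    (hGgain : ∀ (u : ℕ → U) (w x : ℕ → E), (∀ t, x t = G x u t + w t) → InLp p u → InLp p w →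
      InLp p x ∧ lpNorm p x ≤ γ * (lpNorm p u + lpNorm p w))
    {x w : ℕ → E} {u : ℕ → U} (hx : ∀ t, x t = G x u t + w t) (hw : InLp p w) (T : ℕ) :
    lpNorm p ((Iic T).indicator x) ≤ γ * (lpNorm p ((Iic T).indicator u) + lpNorm p w) := by
  obtain ⟨xT, hxT⟩ := hG.exists_solution ((Iic T).indicator u) ((Iic T).indicator w)
  obtain ⟨hxT_mem, hxT_le⟩ := hGgain _ _ xT hxT
    (inLp_indicator_of_finite hp.ne' (finite_Iic T) u)
    (inLp_indicator_of_finite hp.ne' (finite_Iic T) w)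
  have hagree : (Iic T).indicator x = (Iic T).indicator xT :=
    indicator_congr fun t ht => hG.eq_of_solution_of_eq_le hx hxT
      (fun s hs => (indicator_of_mem (mem_Iic.mpr hs) u).symm)
      (fun s hs => (indicator_of_mem (mem_Iic.mpr hs) w).symm) t ht
  calc lpNorm p ((Iic T).indicator x) ≤ lpNorm p xT :=
        hagree ▸ lpNorm_indicator_le hp.le _ hxT_mem
    _ ≤ γ * (lpNorm p ((Iic T).indicator u) + lpNorm p ((Iic T).indicator w)) := hxT_le
    _ ≤ γ * (lpNorm p ((Iic T).indicator u) + lpNorm p w) := by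
        gcongr
        exact lpNorm_indicator_le hp.le _ hw

lemma lpNorm_indicator_imc_input_le (hp : 1 ≤ p) {Δ : (ℕ → E) → (ℕ → U) → ℕ → E}
    (hΔ : StrictlyCausal2 Δ) {γΔ : ℝ}
    (hΔgain : ∀ (x : ℕ → E) (u : ℕ → U), InLp p x → InLp p u →
      InLp p (Δ x u) ∧ lpNorm p (Δ x u) ≤ γΔ * (lpNorm p x + lpNorm p u))
    {M : (ℕ → E) → ℕ → U} (hM : Causal M) {γM : ℝ} (hγM : 0 ≤ γM)
    (hMgain : ∀ v : ℕ → E, InLp p v → InLp p (M v) ∧ lpNorm p (M v) ≤ γM * lpNorm p v)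
    {x w : ℕ → E} {u : ℕ → U} (hw : InLp p w) (hu : u = M (Δ x u + w)) (T : ℕ) :
    lpNorm p ((Iic T).indicator u) ≤
      γM * (γΔ * (lpNorm p ((Iic T).indicator x) + lpNorm p ((Iic T).indicator u)) +
        lpNorm p w) := by
  have hp0 : 0 < p := by linarith
  set xT := (Iic T).indicator x
  set uT := (Iic T).indicator u
  obtain ⟨hΔT_mem, hΔT_le⟩ := hΔgain xT uT (inLp_indicator_of_finite hp0.ne' (finite_Iic T) x)
    (inLp_indicator_of_finite hp0.ne' (finite_Iic T) u)
  have hv_mem : InLp p (Δ xT uT + w) := hΔT_mem.add hp hw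
  obtain ⟨hMv_mem, hMv_le⟩ := hMgain _ hv_mem
  have hagree : uT = (Iic T).indicator (M (Δ xT uT + w)) := by
    refine indicator_congr fun t ht => ?_
    rw [hu]
    refine hM _ _ t fun s hs => ?_
    have hsT : ∀ r < s, r ∈ Iic T := fun r hr => (hr.le.trans hs).trans ht
    simp only [Pi.add_apply, hΔ x xT u uT s (fun r hr => (indicator_of_mem (hsT r hr) x).symm)
      fun r hr => (indicator_of_mem (hsT r hr) u).symm]
  calc lpNorm p uT ≤ lpNorm p (M (Δ xT uT + w)) :=
        (congrArg (lpNorm p) hagree).trans_le (lpNorm_indicator_le hp0.le _ hMv_mem)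
    _ ≤ γM * lpNorm p (Δ xT uT + w) := hMv_le
    _ ≤ γM * (lpNorm p (Δ xT uT) + lpNorm p w) := by gcongr; exact lpNorm_add_le hp hΔT_mem hw
    _ ≤ γM * (γΔ * (lpNorm p xT + lpNorm p uT) + lpNorm p w) := by gcongr

end TruncatedGains

lemma small_gain_bounds {a b W γΔ γF γM : ℝ} (hγΔ : 0 ≤ γΔ) (hγF : 0 ≤ γF) (hγM : 0 ≤ γM)
    (hsg : γΔ * γM * (γF + 1) < 1) (hb : b ≤ γF * (a + W)) (ha : a ≤ γM * (γΔ * (b + a) + W)) :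
    a ≤ γM * (γΔ * γF + 1) / (1 - γΔ * γM * (γF + 1)) * W ∧
      b ≤ γF * (1 + γM * (1 - γΔ)) / (1 - γΔ * γM * (γF + 1)) * W := by
  have hD : 0 < 1 - γΔ * γM * (γF + 1) := by linarith
  have ha' : a ≤ γM * (γΔ * γF + 1) / (1 - γΔ * γM * (γF + 1)) * W := by
    rw [div_mul_eq_mul_div, le_div_iff₀ hD]
    nlinarith [mul_le_mul_of_nonneg_left hb (mul_nonneg hγM hγΔ)]
  refine ⟨ha', hb.trans ?_⟩
  calc γF * (a + W) ≤ γF * (γM * (γΔ * γF + 1) / (1 - γΔ * γM * (γF + 1)) * W + W) := by gcongr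
    _ = γF * (1 + γM * (1 - γΔ)) / (1 - γΔ * γM * (γF + 1)) * W := by
        rw [div_mul_eq_mul_div, div_mul_eq_mul_div, div_add' _ _ _ hD.ne', mul_div_assoc']
        ring

theorem robust_imc_stability_general {n m : ℕ} (p : ℝ) (hp : 1 ≤ p)
    (Fhat Δ : (ℕ → Fin n → ℝ) → (ℕ → Fin m → ℝ) → (ℕ → Fin n → ℝ))
    (hFhat : StrictlyCausal2 Fhat) (hΔsc : StrictlyCausal2 Δ)
    (γΔ γF γM : ℝ) (hγΔ : 0 < γΔ) (hγF : 0 < γF) (hγM : 0 < γM)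
    (hΔgain : ∀ (x : ℕ → Fin n → ℝ) (u : ℕ → Fin m → ℝ), InLp p x → InLp p u →
      InLp p (Δ x u) ∧ lpNorm p (Δ x u) ≤ γΔ * (lpNorm p x + lpNorm p u))
    (hFgain : ∀ (u : ℕ → Fin m → ℝ) (w x : ℕ → Fin n → ℝ),
      (∀ t, x t = Fhat x u t + Δ x u t + w t) → InLp p u → InLp p w →
      InLp p x ∧ lpNorm p x ≤ γF * (lpNorm p u + lpNorm p w))
    (M : (ℕ → Fin n → ℝ) → (ℕ → Fin m → ℝ)) (hM : Causal M)
    (hMgain : ∀ v : ℕ → Fin n → ℝ, InLp p v →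
      InLp p (M v) ∧ lpNorm p (M v) ≤ γM * lpNorm p v)
    (hsg : γM < γΔ⁻¹ * (γF + 1)⁻¹) :
    ∀ (w x what : ℕ → Fin n → ℝ) (u : ℕ → Fin m → ℝ), InLp p w →
      (∀ t, x t = Fhat x u t + Δ x u t + w t) →
      (∀ t, what t = x t - Fhat x u t) →
      u = M what →
      InLp p u ∧ InLp p x ∧
      lpNorm p u ≤ (γM * (γΔ * γF + 1) / (1 - γΔ * γM * (γF + 1))) * lpNorm p w ∧
      lpNorm p x ≤ (γF * (1 + γM * (1 - γΔ)) / (1 - γΔ * γM * (γF + 1))) * lpNorm p w := by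
  intro w x what u hw hx hwhat hu
  have hsg' : γΔ * γM * (γF + 1) < 1 := by
    rwa [lt_inv_mul_iff₀ hγΔ, ← one_div, lt_div_iff₀ (by positivity)] at hsg
  have hwhat' : what = Δ x u + w := funext fun t => by
    rw [hwhat, hx t, Pi.add_apply]; abel
  rw [hwhat'] at hu
  have hp0 : 0 < p := by linarith
  have hbounds := fun T => small_gain_bounds hγΔ.le hγF.le hγM.le hsg'
    ((hFhat.add hΔsc).lpNorm_indicator_solution_le hp0 hγF.le hFgain hx hw T)
    (lpNorm_indicator_imc_input_le hp hΔsc hΔgain hM hγM.le hMgain hw hu T)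
  obtain ⟨hu_mem, hu_le⟩ :=
    inLp_and_lpNorm_le_of_lpNorm_indicator_Iic_le hp0 fun T => (hbounds T).1
  obtain ⟨hx_mem, hx_le⟩ :=
    inLp_and_lpNorm_le_of_lpNorm_indicator_Iic_le hp0 fun T => (hbounds T).2
  exact ⟨hu_mem, hx_mem, hu_le, hx_le⟩

/-- **Theorem 2: robust stability of IMC under model mismatch.** Under the
small-gain condition `γ_M < γ_Δ⁻¹(γ_F + 1)⁻¹`, the mismatched IMC closed-loop trajectories
satisfy `u ∈ ℓ_p` and `x ∈ ℓ_p` with the stated gain bounds; in particular the IMC policy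
stabilizes the true closed-loop system. -/
theorem robust_imc_stability {n m : ℕ} (p : ℝ) (hp : 1 ≤ p)
    (Fhat Δ : (ℕ → Fin n → ℝ) → (ℕ → Fin m → ℝ) → (ℕ → Fin n → ℝ))
    (hFhat : StrictlyCausal2 Fhat) (hΔsc : StrictlyCausal2 Δ)
    (hFhat0 : ∀ x u, Fhat x u 0 = 0) (hΔ0 : ∀ x u, Δ x u 0 = 0)
    (γΔ γF γM : ℝ) (hγΔ : 0 < γΔ) (hγF : 0 < γF) (hγM : 0 < γM)
    (hΔgain : ∀ (x : ℕ → Fin n → ℝ) (u : ℕ → Fin m → ℝ), InLp p x → InLp p u →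
      InLp p (Δ x u) ∧ lpNorm p (Δ x u) ≤ γΔ * (lpNorm p x + lpNorm p u))
    (hFgain : ∀ (u : ℕ → Fin m → ℝ) (w x : ℕ → Fin n → ℝ),
      (∀ t, x t = Fhat x u t + Δ x u t + w t) → InLp p u → InLp p w →
      InLp p x ∧ lpNorm p x ≤ γF * (lpNorm p u + lpNorm p w))
    (M : (ℕ → Fin n → ℝ) → (ℕ → Fin m → ℝ)) (hM : Causal M)
    (hMgain : ∀ v : ℕ → Fin n → ℝ, InLp p v →
      InLp p (M v) ∧ lpNorm p (M v) ≤ γM * lpNorm p v)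
    (hsg : γM < γΔ⁻¹ * (γF + 1)⁻¹) :
    ∀ (w x what : ℕ → Fin n → ℝ) (u : ℕ → Fin m → ℝ), InLp p w →
      (∀ t, x t = Fhat x u t + Δ x u t + w t) →
      (∀ t, what t = x t - Fhat x u t) →
      u = M what →
      InLp p u ∧ InLp p x ∧
      lpNorm p u ≤ (γM * (γΔ * γF + 1) / (1 - γΔ * γM * (γF + 1))) * lpNorm p w ∧
      lpNorm p x ≤ (γF * (1 + γM * (1 - γΔ)) / (1 - γΔ * γM * (γF + 1))) * lpNorm p w :=
  robust_imc_stability_general p hp Fhat Δ hFhat hΔsc γΔ γF γM hγΔ hγF hγM hΔgain hFgain M hM hMgain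
    hsg
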